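/- arXiv:2301.05089 — 3 statements merged into one kernel-verified Lean document; each statement's English description precedes it below -/
import Mathlib

section
/- Consider a finite-horizon worst-case dynamic program on a bounded metric space of approximate states: given value functions defined backwards by V̂_{T+1} ≡ 0, Q̂_t(π, u) = max{ c_t(π, u), sup_{π' ∈ K_t(π,u)} V̂_{t+1}(π') } and V̂_t(π) = inf_{u ∈ U} Q̂_t(π, u), where (i) the per-step worst-case cost c_t(·, u) is L_c-Lipschitz in π uniformly in u, and (ii) the transition range map satisfies H(K_t(π¹,u), K_t(π²,u)) ≤ λ_t · η(π¹, π²) for nonempty bounded sets K_t(π,u). Then each Q̂_t(·, u) and each V̂_t are Lipschitz continuous in π, with Lipschitz constant L_t satisfying the recursion L_t = max{L_c, L_{t+1} · λ_t} and L_{T+1} = 0. -/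
open Metric Bornology

private lemma bddAbove_image_of_lip {P : Type*} [MetricSpace P]
    (f : P → ℝ) (L : ℝ)
    (hf : ∀ x y, |f x - f y| ≤ L * dist x y)
    (s : Set P) (hs : s.Nonempty) (hsb : IsBounded s) :
    BddAbove (f '' s) := by
  obtain ⟨x₀, hx₀⟩ := hs
  refine ⟨f x₀ + |L| * Metric.diam s, ?_⟩
  rintro y ⟨x, hx, rfl⟩
  have h1 : f x - f x₀ ≤ L * dist x x₀ := (abs_le.mp (hf x x₀)).2
  have h2 : L * dist x x₀ ≤ |L| * Metric.diam s := by
    calc L * dist x x₀ ≤ |L| * dist x x₀ :=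
          mul_le_mul_of_nonneg_right (le_abs_self L) dist_nonneg
      _ ≤ |L| * Metric.diam s :=
          mul_le_mul_of_nonneg_left (Metric.dist_le_diam_of_mem hsb hx hx₀) (abs_nonneg L)
  linarith

private lemma sSup_image_sub_le {P : Type*} [MetricSpace P]
    (f : P → ℝ) (L : ℝ) (hL : 0 ≤ L)
    (hf : ∀ x y, |f x - f y| ≤ L * dist x y)
    (s t : Set P) (hs : s.Nonempty) (ht : t.Nonempty)
    (hsb : IsBounded s) (htb : IsBounded t) :
    sSup (f '' s) - sSup (f '' t) ≤ L * hausdorffDist s t := by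
  have hbt : BddAbove (f '' t) := bddAbove_image_of_lip f L hf t ht htb
  have hne : EMetric.hausdorffEdist s t ≠ ⊤ :=
    Metric.hausdorffEdist_ne_top_of_nonempty_of_bounded hs ht hsb htb
  rw [sub_le_iff_le_add]
  refine le_of_forall_pos_le_add ?_
  intro ε hε
  have hδ : (0:ℝ) < ε / (L + 1) := div_pos hε (by linarith)
  refine csSup_le (hs.image f) ?_
  rintro y ⟨x, hx, rfl⟩
  have hinf : infDist x t ≤ hausdorffDist s t :=
    Metric.infDist_le_hausdorffDist_of_mem hx hne
  obtain ⟨z, hz, hdz⟩ := (Metric.infDist_lt_iff ht).mp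
    (lt_add_of_pos_right (infDist x t) hδ)
  have h1 : f x - f z ≤ L * dist x z := (abs_le.mp (hf x z)).2
  have h2 : f z ≤ sSup (f '' t) := le_csSup hbt ⟨z, hz, rfl⟩
  have h3 : L * dist x z ≤ L * (hausdorffDist s t + ε / (L + 1)) :=
    mul_le_mul_of_nonneg_left (by linarith) hL
  have h4 : L * (ε / (L + 1)) ≤ ε := by
    rw [mul_div_assoc'] at *
    rw [div_le_iff₀ (by linarith : (0:ℝ) < L + 1)]
    nlinarith
  nlinarith

theorem approximate_value_functions_lipschitz
    {P : Type*} [MetricSpace P] [BoundedSpace P]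
    {U : Type*} [Nonempty U]
    (T : ℕ)
    (c : ℕ → P → U → ℝ) (hcnn : ∀ t π u, 0 ≤ c t π u)
    (hcb : ∃ C, ∀ t π u, |c t π u| ≤ C)
    (Lc : ℝ) (hLc : 0 ≤ Lc)
    (hcLip : ∀ t ≤ T, ∀ (u : U) (π₁ π₂ : P), |c t π₁ u - c t π₂ u| ≤ Lc * dist π₁ π₂)
    (K : ℕ → P → U → Set P)
    (hKne : ∀ t π u, (K t π u).Nonempty) (hKb : ∀ t π u, IsBounded (K t π u))
    (lam : ℕ → ℝ) (hlam : ∀ t, 0 ≤ lam t)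
    (hKLip : ∀ t ≤ T, ∀ (u : U) (π₁ π₂ : P),
      hausdorffDist (K t π₁ u) (K t π₂ u) ≤ lam t * dist π₁ π₂)
    (Q : ℕ → P → U → ℝ) (V : ℕ → P → ℝ)
    (hVT : ∀ π, V (T + 1) π = 0)
    (hQ : ∀ t ≤ T, ∀ (π : P) (u : U),
      Q t π u = max (c t π u) (sSup (V (t + 1) '' K t π u)))
    (hV : ∀ t ≤ T, ∀ π : P, V t π = ⨅ u : U, Q t π u)
    (L : ℕ → ℝ)
    (hLT : L (T + 1) = 0)
    (hLrec : ∀ t ≤ T, L t = max Lc (L (t + 1) * lam t)) :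
    ∀ t ≤ T, ∀ π₁ π₂ : P,
      (∀ u : U, |Q t π₁ u - Q t π₂ u| ≤ L t * dist π₁ π₂) ∧
      |V t π₁ - V t π₂| ≤ L t * dist π₁ π₂ := by
  -- strong downward induction on T - t
  have key : ∀ n : ℕ, ∀ t ≤ T, T - t < n → ∀ π₁ π₂ : P,
      (∀ u : U, |Q t π₁ u - Q t π₂ u| ≤ L t * dist π₁ π₂) ∧
      |V t π₁ - V t π₂| ≤ L t * dist π₁ π₂ := by
    intro n
    induction n with
    | zero => intro t ht h; omega
    | succ n ih =>
      intro t ht hlt π₁ π₂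
      -- V (t+1) is Lipschitz with constant L (t+1)
      have hVnext : ∀ x y : P, |V (t+1) x - V (t+1) y| ≤ L (t+1) * dist x y := by
        rcases eq_or_lt_of_le ht with rfl | htlt
        · intro x y; simp [hVT, hLT]
        · intro x y
          have h1 : t + 1 ≤ T := htlt
          exact ((ih (t+1) h1 (by omega) x y).2)
      have hLt1nn : 0 ≤ L (t+1) := by
        rcases eq_or_lt_of_le ht with rfl | htlt
        · simp [hLT]
        · have h1 : t + 1 ≤ T := htlt
          have := hLrec (t+1) h1
          rw [this]; exact le_trans hLc (le_max_left _ _)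
      have hLtnn : 0 ≤ L t := by
        rw [hLrec t ht]; exact le_trans hLc (le_max_left _ _)
      -- Q Lipschitz
      have hQlip : ∀ u : U, |Q t π₁ u - Q t π₂ u| ≤ L t * dist π₁ π₂ := by
        intro u
        rw [hQ t ht π₁ u, hQ t ht π₂ u]
        have hsup : ∀ x y : P,
            sSup (V (t+1) '' K t x u) - sSup (V (t+1) '' K t y u)
              ≤ L t * dist x y := by
          intro x y
          have h := sSup_image_sub_le (V (t+1)) (L (t+1)) hLt1nn hVnext
            (K t x u) (K t y u) (hKne t x u) (hKne t y u) (hKb t x u) (hKb t y u)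
          have h2 : L (t+1) * hausdorffDist (K t x u) (K t y u)
              ≤ L (t+1) * (lam t * dist x y) :=
            mul_le_mul_of_nonneg_left (hKLip t ht u x y) hLt1nn
          have h3 : L (t+1) * (lam t * dist x y) ≤ L t * dist x y := by
            rw [hLrec t ht, ← mul_assoc]
            exact mul_le_mul_of_nonneg_right (le_max_right _ _) dist_nonneg
          linarith
        have hc := hcLip t ht u π₁ π₂
        have hc' : Lc * dist π₁ π₂ ≤ L t * dist π₁ π₂ := by
          rw [hLrec t ht]
          exact mul_le_mul_of_nonneg_right (le_max_left _ _) dist_nonneg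
        have hsa : |sSup (V (t+1) '' K t π₁ u) - sSup (V (t+1) '' K t π₂ u)|
            ≤ L t * dist π₁ π₂ := by
          rw [abs_sub_le_iff]
          refine ⟨hsup π₁ π₂, ?_⟩
          have := hsup π₂ π₁
          rwa [dist_comm π₂ π₁] at this
        calc |max (c t π₁ u) (sSup (V (t+1) '' K t π₁ u)) -
                max (c t π₂ u) (sSup (V (t+1) '' K t π₂ u))|
            ≤ max (|c t π₁ u - c t π₂ u|)
                (|sSup (V (t+1) '' K t π₁ u) - sSup (V (t+1) '' K t π₂ u)|) :=
              abs_max_sub_max_le_max _ _ _ _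
          _ ≤ L t * dist π₁ π₂ := max_le (le_trans (hcLip t ht u π₁ π₂) hc') hsa
      refine ⟨hQlip, ?_⟩
      -- V step : infimum
      have hQnn : ∀ (π : P) (u : U), 0 ≤ Q t π u := by
        intro π u
        rw [hQ t ht π u]
        exact le_trans (hcnn t π u) (le_max_left _ _)
      have hbdd : ∀ π : P, BddBelow (Set.range (fun u => Q t π u)) := by
        intro π
        exact ⟨0, by rintro y ⟨u, rfl⟩; exact hQnn π u⟩
      rw [hV t ht π₁, hV t ht π₂, abs_sub_le_iff]
      constructor
      · have h : (⨅ u : U, Q t π₁ u) - L t * dist π₁ π₂ ≤ ⨅ u : U, Q t π₂ u := by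
          refine le_ciInf fun u => ?_
          have h1 : (⨅ u : U, Q t π₁ u) ≤ Q t π₁ u := ciInf_le (hbdd π₁) u
          have h2 := (abs_le.mp (hQlip u)).2
          linarith
        linarith
      · have h : (⨅ u : U, Q t π₂ u) - L t * dist π₁ π₂ ≤ ⨅ u : U, Q t π₁ u := by
          refine le_ciInf fun u => ?_
          have h1 : (⨅ u : U, Q t π₂ u) ≤ Q t π₂ u := ciInf_le (hbdd π₂) u
          have h2 := (abs_le.mp (hQlip u)).1
          linarith
        linarith
  intro t ht π₁ π₂
  exact key (T - t + 1) t ht (by omega) π₁ π₂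
end

section
/- Under the worst-case approximate dynamic program setting, suppose at each t: (i) the true per-step worst-case cost and the approximate per-step worst-case cost differ by at most ε_t, i.e., |c_t(m,u) - ĉ_t(σ(m),u)| ≤ ε_t; (ii) the true next-range of approximate states and the approximate next-range satisfy H(K_{t+1}(m,u), K̂_{t+1}(σ(m),u)) ≤ δ_t; and (iii) the approximate value function V̂_{t+1} is L_{t+1}-Lipschitz. Define value functions backwards by V_{T+1} = V̂_{T+1} ≡ 0, Q_t(m,u) = max{c_t(m,u), sup_{m'∈M_{t+1}(m,u)} V_{t+1}(m')}, V_t(m) = inf_u Q_t(m,u), and analogously Q̂_t, V̂_t with ĉ_t and K̂_{t+1}, where the image of M_{t+1}(m,u) under σ equals K_{t+1}(m,u). Then |Q_t(m,u) - Q̂_t(σ(m),u)| ≤ α_t and |V_t(m) - V̂_t(σ(m))| ≤ α_t for all m, u, where α_t = max(ε_t, α_{t+1} + L_{t+1}·δ_t) and α_{T+1} = 0. -/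
open Metric Bornology

lemma csSup_le_csSup_add' {s t : Set ℝ} {a : ℝ} (hs : s.Nonempty) (ht : BddAbove t)
    (h : ∀ x ∈ s, ∃ y ∈ t, x ≤ y + a) : sSup s ≤ sSup t + a := by
  apply csSup_le hs
  intro x hx
  obtain ⟨y, hy, hxy⟩ := h x hx
  exact hxy.trans (by linarith [le_csSup ht hy])

lemma sSup_image_le_of_hausdorff' {X : Type*} [MetricSpace X]
    (f : X → ℝ) (Lc d : ℝ) (hL : 0 ≤ Lc)
    (hf : ∀ p q, |f p - f q| ≤ Lc * dist p q)
    {A B : Set X} (hA : A.Nonempty)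
    (hBdd : BddAbove (f '' B))
    (hne : EMetric.hausdorffEdist A B ≠ ⊤)
    (hH : hausdorffDist A B ≤ d) :
    sSup (f '' A) ≤ sSup (f '' B) + Lc * d := by
  apply csSup_le (hA.image f)
  rintro _ ⟨a, ha, rfl⟩
  refine le_of_forall_pos_le_add ?_
  intro e he
  have hpos : (0:ℝ) < Lc + 1 := by linarith
  have hδ' : hausdorffDist A B < d + e / (Lc + 1) := by
    have : 0 < e / (Lc + 1) := div_pos he hpos
    linarith
  obtain ⟨b, hb, hab⟩ := exists_dist_lt_of_hausdorffDist_lt ha hδ' hne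
  have h1 : f a ≤ f b + Lc * dist a b := by
    have := (abs_le.mp (hf a b)).2; linarith
  have h2 : f b ≤ sSup (f '' B) := le_csSup hBdd ⟨b, hb, rfl⟩
  have h3 : Lc * dist a b ≤ Lc * (d + e / (Lc + 1)) :=
    mul_le_mul_of_nonneg_left hab.le hL
  have h4 : Lc * (e / (Lc + 1)) ≤ e := by
    rw [mul_div_assoc', div_le_iff₀ hpos]
    nlinarith
  nlinarith

theorem approximate_dp_value_error_bound
    {M Pa : Type*} [MetricSpace M] [MetricSpace Pa] [BoundedSpace M] [BoundedSpace Pa]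
    {U : Type*} [Nonempty U]
    (T : ℕ)
    (σ : ℕ → M → Pa)
    (c : ℕ → M → U → ℝ) (chat : ℕ → Pa → U → ℝ)
    (hcb : ∃ C, ∀ t m u, |c t m u| ≤ C) (hchatb : ∃ C, ∀ t π u, |chat t π u| ≤ C)
    (Mnext : ℕ → M → U → Set M)
    (hMne : ∀ t m u, (Mnext t m u).Nonempty)
    (Khat : ℕ → Pa → U → Set Pa)
    (hKhatne : ∀ t π u, (Khat t π u).Nonempty) (hKhatb : ∀ t π u, IsBounded (Khat t π u))
    (ε δ L α : ℕ → ℝ)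
    (hε : ∀ t, 0 ≤ ε t) (hδ : ∀ t, 0 ≤ δ t) (hL : ∀ t, 0 ≤ L t)
    (hcost : ∀ t ≤ T, ∀ (m : M) (u : U), |c t m u - chat t (σ t m) u| ≤ ε t)
    (Q : ℕ → M → U → ℝ) (V : ℕ → M → ℝ)
    (Qhat : ℕ → Pa → U → ℝ) (Vhat : ℕ → Pa → ℝ)
    (htrans : ∀ t ≤ T, ∀ (m : M) (u : U),
      hausdorffDist (σ (t + 1) '' Mnext t m u) (Khat t (σ t m) u) ≤ δ t)
    (hVhatLip : ∀ t ≤ T, ∀ p₁ p₂ : Pa,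
      |Vhat (t + 1) p₁ - Vhat (t + 1) p₂| ≤ L (t + 1) * dist p₁ p₂)
    (hVT : ∀ m, V (T + 1) m = 0) (hVhatT : ∀ π, Vhat (T + 1) π = 0)
    (hQ : ∀ t ≤ T, ∀ (m : M) (u : U),
      Q t m u = max (c t m u) (sSup (V (t + 1) '' Mnext t m u)))
    (hV : ∀ t ≤ T, ∀ m : M, V t m = ⨅ u : U, Q t m u)
    (hQhat : ∀ t ≤ T, ∀ (π : Pa) (u : U),
      Qhat t π u = max (chat t π u) (sSup (Vhat (t + 1) '' Khat t π u)))
    (hVhat : ∀ t ≤ T, ∀ π : Pa, Vhat t π = ⨅ u : U, Qhat t π u)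
    (hαT : α (T + 1) = 0)
    (hα : ∀ t ≤ T, α t = max (ε t) (α (t + 1) + L (t + 1) * δ t)) :
    ∀ t ≤ T, ∀ (m : M) (u : U),
      |Q t m u - Qhat t (σ t m) u| ≤ α t ∧ |V t m - Vhat t (σ t m)| ≤ α t := by
  obtain ⟨Cc, hCc⟩ := hcb
  obtain ⟨Cch, hCch⟩ := hchatb
  -- all sets in Pa are bounded
  have hPb : ∀ s : Set Pa, IsBounded s := fun s =>
    (isBounded_univ.mpr inferInstance).subset (Set.subset_univ s)
  -- the main induction step
  have step : ∀ t ≤ T,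
      (∀ m' : M, |V (t + 1) m' - Vhat (t + 1) (σ (t + 1) m')| ≤ α (t + 1)) →
      0 ≤ α (t + 1) →
      ∀ (m : M) (u : U),
        |Q t m u - Qhat t (σ t m) u| ≤ α t ∧ |V t m - Vhat t (σ t m)| ≤ α t := by
    intro t htT hIH hα1 m u₀
    set p := σ t m with hp
    have hlip : ∀ p₁ p₂ : Pa, |Vhat (t + 1) p₁ - Vhat (t + 1) p₂| ≤ L (t + 1) * dist p₁ p₂ :=
      hVhatLip t htT
    -- global bound on distances in Pa
    obtain ⟨Cd, hCd⟩ := isBounded_iff.mp (isBounded_univ.mpr (inferInstance : BoundedSpace Pa))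
    have hCd' : ∀ p₁ p₂ : Pa, dist p₁ p₂ ≤ Cd := fun p₁ p₂ =>
      hCd (Set.mem_univ p₁) (Set.mem_univ p₂)
    -- global bound on Vhat (t+1)
    have hVhatUB : ∀ q : Pa, Vhat (t + 1) q ≤ Vhat (t + 1) p + L (t + 1) * Cd := by
      intro q
      have h1 := (abs_le.mp (hlip q p)).2
      have h2 : L (t + 1) * dist q p ≤ L (t + 1) * Cd :=
        mul_le_mul_of_nonneg_left (hCd' q p) (hL _)
      linarith
    have hVhatBdd : ∀ s : Set Pa, BddAbove (Vhat (t + 1) '' s) := by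
      intro s
      refine ⟨Vhat (t + 1) p + L (t + 1) * Cd, ?_⟩
      rintro _ ⟨q, _, rfl⟩
      exact hVhatUB q
    -- key bound on Q, for every action u
    have keyQ : ∀ u : U, |Q t m u - Qhat t p u| ≤ α t := by
      intro u
      set A := Mnext t m u with hA
      set B := Khat t p u with hB
      have hAne : A.Nonempty := hMne t m u
      have hBne : B.Nonempty := hKhatne t p u
      have hA'ne : (σ (t + 1) '' A).Nonempty := hAne.image _
      -- bound between sSup (V '' A) and sSup (Vhat '' σ '' A)
      have hS'eq : Vhat (t + 1) '' (σ (t + 1) '' A) = (fun m' => Vhat (t + 1) (σ (t + 1) m')) '' A := by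
        rw [Set.image_image]
      have hSbdd : BddAbove (V (t + 1) '' A) := by
        refine ⟨Vhat (t + 1) p + L (t + 1) * Cd + α (t + 1), ?_⟩
        rintro _ ⟨m', _, rfl⟩
        have h1 := (abs_le.mp (hIH m')).2
        have h2 := hVhatUB (σ (t + 1) m')
        linarith
      have hS'bdd : BddAbove (Vhat (t + 1) '' (σ (t + 1) '' A)) := hVhatBdd _
      have bound1 : |sSup (V (t + 1) '' A) - sSup (Vhat (t + 1) '' (σ (t + 1) '' A))| ≤ α (t + 1) := by
        rw [abs_sub_le_iff]
        constructor
        · have := csSup_le_csSup_add' (hAne.image (V (t + 1))) hS'bdd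
            (fun x hx => by
              obtain ⟨m', hm', rfl⟩ := hx
              exact ⟨Vhat (t + 1) (σ (t + 1) m'),
                ⟨σ (t + 1) m', Set.mem_image_of_mem _ hm', rfl⟩,
                by have := (abs_le.mp (hIH m')).2; linarith⟩)
          linarith
        · have := csSup_le_csSup_add' (hA'ne.image (Vhat (t + 1))) hSbdd
            (fun x hx => by
              obtain ⟨q, ⟨m', hm', rfl⟩, rfl⟩ := hx
              exact ⟨V (t + 1) m', Set.mem_image_of_mem _ hm',
                by have := (abs_le.mp (hIH m')).1; linarith⟩)
          linarith
      -- bound between sSup (Vhat '' σ '' A) and sSup (Vhat '' B)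
      have hne' : EMetric.hausdorffEdist (σ (t + 1) '' A) B ≠ ⊤ :=
        hausdorffEdist_ne_top_of_nonempty_of_bounded hA'ne hBne (hPb _) (hPb _)
      have hH : hausdorffDist (σ (t + 1) '' A) B ≤ δ t := htrans t htT m u
      have bound2 : |sSup (Vhat (t + 1) '' (σ (t + 1) '' A)) - sSup (Vhat (t + 1) '' B)| ≤
          L (t + 1) * δ t := by
        rw [abs_sub_le_iff]
        constructor
        · have := sSup_image_le_of_hausdorff' (Vhat (t + 1)) (L (t + 1)) (δ t) (hL _)
            hlip hA'ne (hVhatBdd B) hne' hH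
          linarith
        · have := sSup_image_le_of_hausdorff' (Vhat (t + 1)) (L (t + 1)) (δ t) (hL _)
            hlip hBne (hVhatBdd _) (hausdorffEdist_ne_top_of_nonempty_of_bounded hBne hA'ne (hPb _) (hPb _))
            (by rwa [hausdorffDist_comm] at hH)
          linarith
      have bound3 : |sSup (V (t + 1) '' A) - sSup (Vhat (t + 1) '' B)| ≤
          α (t + 1) + L (t + 1) * δ t := by
        calc |sSup (V (t + 1) '' A) - sSup (Vhat (t + 1) '' B)| ≤
            |sSup (V (t + 1) '' A) - sSup (Vhat (t + 1) '' (σ (t + 1) '' A))| +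
            |sSup (Vhat (t + 1) '' (σ (t + 1) '' A)) - sSup (Vhat (t + 1) '' B)| :=
              abs_sub_le _ _ _
          _ ≤ α (t + 1) + L (t + 1) * δ t := add_le_add bound1 bound2
      rw [hQ t htT, hQhat t htT]
      calc |max (c t m u) (sSup (V (t + 1) '' A)) -
            max (chat t p u) (sSup (Vhat (t + 1) '' B))| ≤
          max |c t m u - chat t p u|
            |sSup (V (t + 1) '' A) - sSup (Vhat (t + 1) '' B)| :=
            abs_max_sub_max_le_max _ _ _ _
        _ ≤ max (ε t) (α (t + 1) + L (t + 1) * δ t) :=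
            max_le_max (hcost t htT m u) bound3
        _ = α t := (hα t htT).symm
    -- bound on V
    have hQlb : BddBelow (Set.range fun u : U => Q t m u) := by
      refine ⟨-Cc, ?_⟩
      rintro _ ⟨u, rfl⟩
      show -Cc ≤ Q t m u
      rw [hQ t htT]
      have := (abs_le.mp (hCc t m u)).1
      exact le_trans this (le_max_left _ _)
    have hQhatlb : BddBelow (Set.range fun u : U => Qhat t p u) := by
      refine ⟨-Cch, ?_⟩
      rintro _ ⟨u, rfl⟩
      show -Cch ≤ Qhat t p u
      rw [hQhat t htT]
      have := (abs_le.mp (hCch t p u)).1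
      exact le_trans this (le_max_left _ _)
    have keyV : |V t m - Vhat t p| ≤ α t := by
      rw [hV t htT, hVhat t htT, abs_sub_le_iff]
      constructor
      · rw [sub_le_iff_le_add]
        refine le_trans ?_ (add_le_add_right (le_refl _) _)
        have : ∀ u : U, (⨅ u' : U, Q t m u') ≤ Qhat t p u + α t := by
          intro u
          have h1 : (⨅ u' : U, Q t m u') ≤ Q t m u := ciInf_le hQlb u
          have h2 := (abs_le.mp (keyQ u)).2
          linarith
        have := le_ciInf (fun u => by linarith [this u] :
          ∀ u : U, (⨅ u' : U, Q t m u') - α t ≤ Qhat t p u)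
        linarith
      · rw [sub_le_iff_le_add]
        have : ∀ u : U, (⨅ u' : U, Qhat t p u') ≤ Q t m u + α t := by
          intro u
          have h1 : (⨅ u' : U, Qhat t p u') ≤ Qhat t p u := ciInf_le hQhatlb u
          have h2 := (abs_le.mp (keyQ u)).1
          linarith
        have := le_ciInf (fun u => by linarith [this u] :
          ∀ u : U, (⨅ u' : U, Qhat t p u') - α t ≤ Q t m u)
        linarith
    exact ⟨keyQ u₀, keyV⟩
  -- downward induction
  have main : ∀ d t, t + d = T → ∀ (m : M) (u : U),
      |Q t m u - Qhat t (σ t m) u| ≤ α t ∧ |V t m - Vhat t (σ t m)| ≤ α t := by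
    intro d
    induction d with
    | zero =>
      intro t ht
      have ht' : t = T := by omega
      apply step t (le_of_eq ht')
      · intro m'
        rw [ht', hVT m', hVhatT (σ (T + 1) m'), hαT]
        simp
      · rw [ht', hαT]
    | succ d ih =>
      intro t ht
      have ht1 : (t + 1) + d = T := by omega
      have htT : t ≤ T := by omega
      have ht1T : t + 1 ≤ T := by omega
      have hαpos : 0 ≤ α (t + 1) := by
        rw [hα (t + 1) ht1T]
        exact le_trans (hε (t + 1)) (le_max_left _ _)
      apply step t htT
      · intro m'
        exact (ih (t + 1) ht1 m' (Classical.arbitrary U)).2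
      · exact hαpos
  intro t htT m u
  exact main (T - t) t (by omega) m u
end

section
/- Under the same setting as the approximate dynamic program error bound, let ĝ_t(π) be a minimizer of Q̂_t(π, ·) and define the strategy-evaluation functions Θ_{T+1} ≡ 0, Θ_t(m,u) = max{c_t(m,u), sup_{m'∈M_{t+1}(m,u)} Λ_{t+1}(m')}, Λ_t(m) = Θ_t(m, ĝ_t(σ(m))). Then for all t, m, u: |Q_t(m,u) - Θ_t(m,u)| ≤ 2α_t and |V_t(m) - Λ_t(m)| ≤ 2α_t, where α_t = max(ε_t, α_{t+1} + L_{t+1}·δ_t) with α_{T+1} = 0, V_t and Q_t are the exact value functions, and L_{t+1} is the Lipschitz constant of the approximate value function V̂_{t+1}. -/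
open Metric Bornology

private lemma real_le_of_forall_pos_le_add {a b : ℝ} (h : ∀ ε > 0, a ≤ b + ε) : a ≤ b := by
  by_contra hc
  push_neg at hc
  have := h ((a - b) / 2) (by linarith)
  linarith

private lemma abs_sSup_image_sub_le {X : Type*} {f g : X → ℝ} {S : Set X} {a : ℝ}
    (hS : S.Nonempty) (hfg : ∀ x ∈ S, |f x - g x| ≤ a)
    (hf : BddAbove (f '' S)) (hg : BddAbove (g '' S)) :
    |sSup (f '' S) - sSup (g '' S)| ≤ a := by
  have side : ∀ (p q : X → ℝ), (∀ x ∈ S, |p x - q x| ≤ a) → BddAbove (q '' S) →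
      sSup (p '' S) ≤ sSup (q '' S) + a := by
    intro p q hpq hq
    apply csSup_le (hS.image p)
    rintro y ⟨x, hx, rfl⟩
    have h1 : p x ≤ q x + a := by have := (abs_le.1 (hpq x hx)).2; linarith
    have h2 : q x ≤ sSup (q '' S) := le_csSup hq ⟨x, hx, rfl⟩
    linarith
  rw [abs_sub_le_iff]
  constructor
  · have := side f g hfg hg; linarith
  · have := side g f (fun x hx => by rw [abs_sub_comm]; exact hfg x hx) hf; linarith

private lemma abs_sSup_sub_sSup_lip {X : Type*} [MetricSpace X]
    {f : X → ℝ} {S T : Set X} {L d : ℝ}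
    (hSne : S.Nonempty) (hTne : T.Nonempty)
    (hfin : EMetric.hausdorffEdist S T ≠ ⊤)
    (hH : hausdorffDist S T ≤ d)
    (hLip : ∀ x y, |f x - f y| ≤ L * dist x y)
    (hL : 0 ≤ L)
    (hfS : BddAbove (f '' S)) (hfT : BddAbove (f '' T)) :
    |sSup (f '' S) - sSup (f '' T)| ≤ L * d := by
  have side : ∀ (A B : Set X), A.Nonempty → B.Nonempty →
      EMetric.hausdorffEdist A B ≠ ⊤ → hausdorffDist A B ≤ d → BddAbove (f '' B) →
      sSup (f '' A) ≤ sSup (f '' B) + L * d := by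
    intro A B hA hB hfinAB hHAB hfB
    apply real_le_of_forall_pos_le_add
    intro ε hε
    have hη : (0:ℝ) < ε / (L + 1) := by positivity
    apply csSup_le (hA.image f)
    rintro y ⟨x, hx, rfl⟩
    obtain ⟨z, hz, hdz⟩ := exists_dist_lt_of_hausdorffDist_lt hx
      (lt_of_le_of_lt hHAB (lt_add_of_pos_right _ hη)) hfinAB
    have h1 : f x ≤ f z + L * dist x z := by
      have := (abs_le.1 (hLip x z)).2; linarith
    have h2 : f z ≤ sSup (f '' B) := le_csSup hfB ⟨z, hz, rfl⟩
    have h3 : L * dist x z ≤ L * (d + ε / (L + 1)) :=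
      mul_le_mul_of_nonneg_left hdz.le hL
    have h4 : L * (ε / (L + 1)) ≤ ε := by
      rw [mul_div_assoc']
      rw [div_le_iff₀ (by linarith)]
      nlinarith
    nlinarith
  have h1 := side S T hSne hTne hfin hH hfT
  have h2 := side T S hTne hSne (by rw [EMetric.hausdorffEdist, hausdorffEDist_comm]; exact hfin)
    (by rwa [hausdorffDist_comm]) hfS
  rw [abs_sub_le_iff]; constructor <;> linarith

private lemma abs_ciInf_sub_ciInf_le {U : Type*} [Nonempty U] {f g : U → ℝ} {a : ℝ}
    (h : ∀ u, |f u - g u| ≤ a)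
    (hf : BddBelow (Set.range f)) (hg : BddBelow (Set.range g)) :
    |(⨅ u, f u) - ⨅ u, g u| ≤ a := by
  have side : ∀ (p q : U → ℝ), (∀ u, |p u - q u| ≤ a) → BddBelow (Set.range p) →
      (⨅ u, p u) ≤ (⨅ u, q u) + a := by
    intro p q hpq hp
    rw [← sub_le_iff_le_add]
    apply le_ciInf
    intro u
    have h1 : (⨅ u, p u) ≤ p u := ciInf_le hp u
    have h2 : p u ≤ q u + a := by have := (abs_le.1 (hpq u)).2; linarith
    linarith
  have h1 := side f g h hf
  have h2 := side g f (fun u => by rw [abs_sub_comm]; exact h u) hg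
  rw [abs_sub_le_iff]; constructor <;> linarith

private lemma abs_sSup_le {s : Set ℝ} {B : ℝ} (hs : s.Nonempty) (h : ∀ x ∈ s, |x| ≤ B) :
    |sSup s| ≤ B := by
  obtain ⟨x, hx⟩ := hs
  have hbdd : BddAbove s := ⟨B, fun y hy => (abs_le.1 (h y hy)).2⟩
  rw [abs_le]
  constructor
  · exact le_trans (abs_le.1 (h x hx)).1 (le_csSup hbdd hx)
  · exact csSup_le ⟨x, hx⟩ fun y hy => (abs_le.1 (h y hy)).2

private lemma abs_max_le' {a b B : ℝ} (h1 : |a| ≤ B) (h2 : |b| ≤ B) : |max a b| ≤ B := by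
  rw [abs_le] at *
  exact ⟨le_trans h1.1 (le_max_left _ _), max_le h1.2 h2.2⟩

private lemma abs_ciInf_le' {U : Type*} [Nonempty U] {f : U → ℝ} {B : ℝ}
    (h : ∀ u, |f u| ≤ B) : |⨅ u, f u| ≤ B := by
  obtain ⟨u₀⟩ := ‹Nonempty U›
  have hbdd : BddBelow (Set.range f) := ⟨-B, by rintro y ⟨u, rfl⟩; exact (abs_le.1 (h u)).1⟩
  rw [abs_le]
  constructor
  · exact le_ciInf fun u => (abs_le.1 (h u)).1
  · exact le_trans (ciInf_le hbdd u₀) (abs_le.1 (h u₀)).2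

private lemma bddAbove_image_of_abs_le {X : Type*} {f : X → ℝ} {S : Set X} {B : ℝ}
    (h : ∀ x, |f x| ≤ B) : BddAbove (f '' S) :=
  ⟨B, by rintro y ⟨x, _, rfl⟩; exact (abs_le.1 (h x)).2⟩

private lemma bddBelow_range_of_abs_le {X : Type*} {f : X → ℝ} {B : ℝ}
    (h : ∀ x, |f x| ≤ B) : BddBelow (Set.range f) :=
  ⟨-B, by rintro y ⟨x, rfl⟩; exact (abs_le.1 (h x)).1⟩

theorem approximate_strategy_performance_loss_bound
    {M Pa : Type*} [MetricSpace M] [MetricSpace Pa] [BoundedSpace M] [BoundedSpace Pa]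
    {U : Type*} [Nonempty U]
    (T : ℕ)
    (σ : ℕ → M → Pa)
    (c : ℕ → M → U → ℝ) (chat : ℕ → Pa → U → ℝ)
    (hcb : ∃ C, ∀ t m u, |c t m u| ≤ C) (hchatb : ∃ C, ∀ t π u, |chat t π u| ≤ C)
    (Mnext : ℕ → M → U → Set M)
    (hMne : ∀ t m u, (Mnext t m u).Nonempty)
    (Khat : ℕ → Pa → U → Set Pa)
    (hKhatne : ∀ t π u, (Khat t π u).Nonempty) (hKhatb : ∀ t π u, IsBounded (Khat t π u))
    (ε δ L α : ℕ → ℝ)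
    (hε : ∀ t, 0 ≤ ε t) (hδ : ∀ t, 0 ≤ δ t) (hL : ∀ t, 0 ≤ L t)
    (hcost : ∀ t ≤ T, ∀ (m : M) (u : U), |c t m u - chat t (σ t m) u| ≤ ε t)
    (Q : ℕ → M → U → ℝ) (V : ℕ → M → ℝ)
    (Qhat : ℕ → Pa → U → ℝ) (Vhat : ℕ → Pa → ℝ)
    (htrans : ∀ t ≤ T, ∀ (m : M) (u : U),
      hausdorffDist (σ (t + 1) '' Mnext t m u) (Khat t (σ t m) u) ≤ δ t)
    (hVhatLip : ∀ t ≤ T, ∀ p₁ p₂ : Pa,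
      |Vhat (t + 1) p₁ - Vhat (t + 1) p₂| ≤ L (t + 1) * dist p₁ p₂)
    (hVT : ∀ m, V (T + 1) m = 0) (hVhatT : ∀ π, Vhat (T + 1) π = 0)
    (hQ : ∀ t ≤ T, ∀ (m : M) (u : U),
      Q t m u = max (c t m u) (sSup (V (t + 1) '' Mnext t m u)))
    (hV : ∀ t ≤ T, ∀ m : M, V t m = ⨅ u : U, Q t m u)
    (hQhat : ∀ t ≤ T, ∀ (π : Pa) (u : U),
      Qhat t π u = max (chat t π u) (sSup (Vhat (t + 1) '' Khat t π u)))
    (hVhat : ∀ t ≤ T, ∀ π : Pa, Vhat t π = ⨅ u : U, Qhat t π u)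
    (hαT : α (T + 1) = 0)
    (hα : ∀ t ≤ T, α t = max (ε t) (α (t + 1) + L (t + 1) * δ t))
    (ghat : ℕ → Pa → U)
    (hghat : ∀ t ≤ T, ∀ π : Pa, Qhat t π (ghat t π) = ⨅ u : U, Qhat t π u)
    (Θ : ℕ → M → U → ℝ) (Λ : ℕ → M → ℝ)
    (hΛT : ∀ m, Λ (T + 1) m = 0)
    (hΘ : ∀ t ≤ T, ∀ (m : M) (u : U),
      Θ t m u = max (c t m u) (sSup (Λ (t + 1) '' Mnext t m u)))
    (hΛ : ∀ t ≤ T, ∀ m : M, Λ t m = Θ t m (ghat t (σ t m))) :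
    ∀ t ≤ T, ∀ (m : M) (u : U),
      |Q t m u - Θ t m u| ≤ 2 * α t ∧ |V t m - Λ t m| ≤ 2 * α t := by
  by_cases hMex : Nonempty M
  swap
  · intro t ht m; exact absurd ⟨m⟩ hMex
  obtain ⟨m₀⟩ := hMex
  obtain ⟨Cc, hCc⟩ := hcb
  obtain ⟨C, hC⟩ := hchatb
  obtain ⟨u₀⟩ := ‹Nonempty U›
  have hCc0 : 0 ≤ Cc := le_trans (abs_nonneg _) (hCc 0 m₀ u₀)
  have hC0 : 0 ≤ C := le_trans (abs_nonneg _) (hC 0 (σ 0 m₀) u₀)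
  have main : ∀ k t, t + k = T + 1 →
      ((∀ π, |Vhat t π| ≤ C) ∧ (∀ m, |V t m| ≤ Cc) ∧ (∀ m, |Λ t m| ≤ Cc) ∧
       (∀ m, |V t m - Vhat t (σ t m)| ≤ α t) ∧ (∀ m, |Λ t m - Vhat t (σ t m)| ≤ α t) ∧
       (t ≤ T → ∀ (m : M) (u : U),
         |Q t m u - Qhat t (σ t m) u| ≤ α t ∧ |Θ t m u - Qhat t (σ t m) u| ≤ α t)) := by
    intro k
    induction k with
    | zero =>
      intro t ht
      have ht' : t = T + 1 := by omega
      subst ht'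
      refine ⟨fun π => by rw [hVhatT]; simpa using hC0,
              fun m => by rw [hVT]; simpa using hCc0,
              fun m => by rw [hΛT]; simpa using hCc0,
              fun m => by rw [hVT, hVhatT, hαT]; simp,
              fun m => by rw [hΛT, hVhatT, hαT]; simp,
              fun h => absurd h (by omega)⟩
    | succ k ih =>
      intro t ht
      have htT : t ≤ T := by omega
      obtain ⟨ihVhat, ihV, ihΛ, ihVap, ihΛap, -⟩ := ih (t + 1) (by omega)
      -- bound on Qhat at time t
      have hQhatb : ∀ π u, |Qhat t π u| ≤ C := by
        intro π u
        rw [hQhat t htT π u]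
        refine abs_max_le' (hC t π u) (abs_sSup_le ((hKhatne t π u).image _) ?_)
        rintro y ⟨z, _, rfl⟩
        exact ihVhat z
      have hVhatb : ∀ π, |Vhat t π| ≤ C := by
        intro π
        rw [hVhat t htT π]
        exact abs_ciInf_le' fun u => hQhatb π u
      have hQb : ∀ m u, |Q t m u| ≤ Cc := by
        intro m u
        rw [hQ t htT m u]
        refine abs_max_le' (hCc t m u) (abs_sSup_le ((hMne t m u).image _) ?_)
        rintro y ⟨z, _, rfl⟩
        exact ihV z
      have hVb : ∀ m, |V t m| ≤ Cc := by
        intro m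
        rw [hV t htT m]
        exact abs_ciInf_le' fun u => hQb m u
      have hΘb : ∀ m u, |Θ t m u| ≤ Cc := by
        intro m u
        rw [hΘ t htT m u]
        refine abs_max_le' (hCc t m u) (abs_sSup_le ((hMne t m u).image _) ?_)
        rintro y ⟨z, _, rfl⟩
        exact ihΛ z
      have hΛb : ∀ m, |Λ t m| ≤ Cc := by
        intro m
        rw [hΛ t htT m]
        exact hΘb m _
      -- key estimate
      have key : ∀ (W : ℕ → M → ℝ) (R : ℕ → M → U → ℝ),
          (∀ m, |W (t + 1) m| ≤ Cc) →
          (∀ m, |W (t + 1) m - Vhat (t + 1) (σ (t + 1) m)| ≤ α (t + 1)) →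
          (∀ (m : M) (u : U),
            R t m u = max (c t m u) (sSup (W (t + 1) '' Mnext t m u))) →
          ∀ (m : M) (u : U), |R t m u - Qhat t (σ t m) u| ≤ α t := by
        intro W R hWb hWap hR m u
        rw [hR m u, hQhat t htT (σ t m) u]
        refine le_trans (abs_max_sub_max_le_max _ _ _ _) (max_le ?_ ?_)
        · exact le_trans (hcost t htT m u) (by rw [hα t htT]; exact le_max_left _ _)
        · have hmid : |sSup (W (t + 1) '' Mnext t m u) -
              sSup ((fun m' => Vhat (t + 1) (σ (t + 1) m')) '' Mnext t m u)| ≤ α (t + 1) :=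
            abs_sSup_image_sub_le (hMne t m u) (fun x _ => hWap x)
              (bddAbove_image_of_abs_le hWb)
              (bddAbove_image_of_abs_le fun x => ihVhat (σ (t + 1) x))
          have himg : (fun m' => Vhat (t + 1) (σ (t + 1) m')) '' Mnext t m u
              = Vhat (t + 1) '' (σ (t + 1) '' Mnext t m u) := by
            rw [Set.image_image]
          have hne1 : (σ (t + 1) '' Mnext t m u).Nonempty := (hMne t m u).image _
          have hfin : EMetric.hausdorffEdist (σ (t + 1) '' Mnext t m u)
              (Khat t (σ t m) u) ≠ ⊤ :=
            hausdorffEdist_ne_top_of_nonempty_of_bounded hne1 (hKhatne t (σ t m) u)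
              (IsBounded.all _) (IsBounded.all _)
          have hlip : |sSup (Vhat (t + 1) '' (σ (t + 1) '' Mnext t m u)) -
              sSup (Vhat (t + 1) '' Khat t (σ t m) u)| ≤ L (t + 1) * δ t :=
            abs_sSup_sub_sSup_lip hne1 (hKhatne t (σ t m) u) hfin (htrans t htT m u)
              (hVhatLip t htT) (hL (t + 1))
              (bddAbove_image_of_abs_le ihVhat) (bddAbove_image_of_abs_le ihVhat)
          rw [himg] at hmid
          have htri : |sSup (W (t + 1) '' Mnext t m u) -
              sSup (Vhat (t + 1) '' Khat t (σ t m) u)| ≤ α (t + 1) + L (t + 1) * δ t := by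
            have := abs_sub_le (sSup (W (t + 1) '' Mnext t m u))
              (sSup (Vhat (t + 1) '' (σ (t + 1) '' Mnext t m u)))
              (sSup (Vhat (t + 1) '' Khat t (σ t m) u))
            linarith
          exact le_trans htri (by rw [hα t htT]; exact le_max_right _ _)
      have hQap := key V Q ihV ihVap (hQ t htT)
      have hΘap := key Λ Θ ihΛ ihΛap (hΘ t htT)
      have hVap : ∀ m, |V t m - Vhat t (σ t m)| ≤ α t := by
        intro m
        rw [hV t htT m, hVhat t htT (σ t m)]
        exact abs_ciInf_sub_ciInf_le (fun u => hQap m u)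
          (bddBelow_range_of_abs_le (hQb m)) (bddBelow_range_of_abs_le (hQhatb (σ t m)))
      have hΛap : ∀ m, |Λ t m - Vhat t (σ t m)| ≤ α t := by
        intro m
        rw [hΛ t htT m, hVhat t htT (σ t m), ← hghat t htT (σ t m)]
        exact hΘap m _
      exact ⟨hVhatb, hVb, hΛb, hVap, hΛap, fun _ m u => ⟨hQap m u, hΘap m u⟩⟩
  intro t ht m u
  obtain ⟨_, _, _, hVap, hΛap, hQΘ⟩ := main (T + 1 - t) t (by omega)
  obtain ⟨hQap, hΘap⟩ := hQΘ ht m u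
  constructor
  · have := abs_sub_le (Q t m u) (Qhat t (σ t m) u) (Θ t m u)
    rw [abs_sub_comm (Qhat t (σ t m) u)] at this
    linarith
  · have := abs_sub_le (V t m) (Vhat t (σ t m)) (Λ t m)
    rw [abs_sub_comm (Vhat t (σ t m))] at this
    have h1 := hVap m
    have h2 := hΛap m
    linarith
end
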